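/- Let (R, m) be a Noetherian local ring, E a submodule of R^p of finite colength, and s sufficiently large. Then m^{s+1}·R_i(E)·S_{n−i}(R^p) ⊆ R_{i+1}(E)·S_{n−i−1}(R^p) for all n and all 0 ≤ i ≤ n−1, and consequently Σ_{i=0}^{n−1} length_R( R_i(E)S_{n−i}(R^p) / (m^{s+1}R_i(E)S_{n−i}(R^p) + R_{i+1}(E)S_{n−i−1}(R^p)) ) = length_R( S_n(R^p)/R_n(E) ). -/

import Mathlib

open MvPolynomial

/-- The length of the subquotient `P / (Q ∩ P)` of a module, as the Krull dimension of its
submodule lattice. -/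
noncomputable def sqLen (R : Type*) [CommRing R] {M : Type*} [AddCommGroup M] [Module R M]
    (P Q : Submodule R M) : WithBot ℕ∞ :=
  Order.krullDim (Submodule R (↥P ⧸ (Q.comap P.subtype)))

/-- The linear form `w(h) = h₁T₁ + ⋯ + h_pT_p` in `Sym(R^p) = R[T₁,…,T_p]` attached to
`h ∈ R^p`. -/
noncomputable def linForm (R : Type*) [CommRing R] (p : ℕ) (h : Fin p → R) :
    MvPolynomial (Fin p) R :=
  ∑ i, MvPolynomial.C (h i) * MvPolynomial.X i

/-- The ideal `I = A·R₁(E)` of `A = Sym(R^p)` generated by the linear forms `w(h)`, `h ∈ E`,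
i.e. the ideal generated by the degree-one part of the Rees algebra of `E ⊆ R^p`. -/
noncomputable def reesIdeal (R : Type*) [CommRing R] (p : ℕ)
    (E : Submodule R (Fin p → R)) : Ideal (MvPolynomial (Fin p) R) :=
  Ideal.span (linForm R p '' (E : Set (Fin p → R)))

namespace FCH


open Order

/-- The "length" of a preorder: supremum of lengths of strict chains, as `ℕ∞`. -/
noncomputable def eLen (α : Type*) [Preorder α] : ℕ∞ := ⨆ (p : LTSeries α), p.length

instance (α : Type*) [Preorder α] [Nonempty α] : Nonempty (LTSeries α) :=
  ⟨RelSeries.singleton _ (Classical.arbitrary α)⟩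

lemma krullDim_eq_eLen (α : Type*) [Preorder α] [Nonempty α] :
    Order.krullDim α = (eLen α : WithBot ℕ∞) := by
  rw [Order.krullDim_eq_iSup_length, eLen, WithBot.coe_iSup (OrderTop.bddAbove _)]

lemma height_le_eLen {α : Type*} [Preorder α] [Nonempty α] (a : α) :
    Order.height a ≤ eLen α := by
  have := Order.height_le_krullDim a
  rwa [krullDim_eq_eLen, WithBot.coe_le_coe] at this

lemma height_add_one_le {α : Type*} [Preorder α] {a b : α} (h : a < b) :
    Order.height a + 1 ≤ Order.height b := by
  rcases eq_or_ne (Order.height a) ⊤ with ht | ht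
  · have : Order.height b = ⊤ := top_le_iff.mp (ht ▸ Order.height_mono h.le)
    simp [this]
  · exact Order.add_one_le_of_lt (Order.height_strictMono h (lt_top_iff_ne_top.mpr ht))

variable {R : Type*} [CommRing R] {M : Type*} [AddCommGroup M] [Module R M]

/-- The two "coordinate" maps for the modular-lattice argument. -/
private noncomputable def Fm (W : Submodule R M) (u : Submodule R M) : Submodule R ↥W :=
  (u ⊓ W).comap W.subtype

private noncomputable def Gm (W : Submodule R M) (u : Submodule R M) : Submodule R (M ⧸ W) :=
  u.map W.mkQ

lemma Fm_mono (W : Submodule R M) : Monotone (Fm W) := fun _ _ h =>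
  Submodule.comap_mono (inf_le_inf_right _ h)

lemma Gm_mono (W : Submodule R M) : Monotone (Gm W) := fun _ _ h => Submodule.map_mono h

lemma Fm_or_Gm_strict (W : Submodule R M) {u v : Submodule R M} (h : u < v) :
    Fm W u < Fm W v ∨ Gm W u < Gm W v := by
  by_contra hc
  push_neg at hc
  obtain ⟨h1, h2⟩ := hc
  have hF : Fm W u = Fm W v := ((Fm_mono W h.le).lt_or_eq).resolve_left h1
  have hG : Gm W u = Gm W v := ((Gm_mono W h.le).lt_or_eq).resolve_left h2
  have hinf : u ⊓ W = v ⊓ W := by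
    have := congrArg (Submodule.map W.subtype) hF
    simpa [Fm, Submodule.map_comap_subtype, inf_comm] using this
  have hsup : u ⊔ W = v ⊔ W := by
    have := congrArg (Submodule.comap W.mkQ) hG
    simpa [Gm, Submodule.comap_map_mkQ, sup_comm] using this
  exact absurd hsup (sup_lt_sup_of_lt_of_inf_le_inf h hinf.ge).ne

lemma chain_le (W : Submodule R M) (x : LTSeries (Submodule R M)) :
    (x.length : ℕ∞) ≤ Order.height (Fm W x.last) + Order.height (Gm W x.last) := by
  generalize hn : x.length = N
  induction N generalizing x with
  | zero => simp
  | succ n ih =>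
    have hne : x.length ≠ 0 := by omega
    have hlast : x.eraseLast.last < x.last := x.eraseLast_last_rel_last hne
    have hlen : x.eraseLast.length = n := by simp [RelSeries.eraseLast, hn]
    have IH := ih x.eraseLast hlen
    rcases Fm_or_Gm_strict W hlast with hs | hs
    · calc ((n : ℕ∞) + 1) ≤
          (Order.height (Fm W x.eraseLast.last) + Order.height (Gm W x.eraseLast.last)) + 1 :=
            add_le_add_left IH 1
        _ = (Order.height (Fm W x.eraseLast.last) + 1) + Order.height (Gm W x.eraseLast.last) := by
            ring
        _ ≤ Order.height (Fm W x.last) + Order.height (Gm W x.last) :=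
            add_le_add (height_add_one_le hs) (Order.height_mono (Gm_mono W hlast.le))
    · calc ((n : ℕ∞) + 1) ≤
          (Order.height (Fm W x.eraseLast.last) + Order.height (Gm W x.eraseLast.last)) + 1 :=
            add_le_add_left IH 1
        _ = Order.height (Fm W x.eraseLast.last) + (Order.height (Gm W x.eraseLast.last) + 1) := by
            ring
        _ ≤ Order.height (Fm W x.last) + Order.height (Gm W x.last) :=
            add_le_add (Order.height_mono (Fm_mono W hlast.le)) (height_add_one_le hs)

lemma combine_le (W : Submodule R M) (p : LTSeries (Submodule R ↥W))
    (q : LTSeries (Submodule R (M ⧸ W))) :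
    (p.length : ℕ∞) + (q.length : ℕ∞) ≤ eLen (Submodule R M) := by
  have hmapstrict : StrictMono (Submodule.map W.subtype) :=
    Submodule.map_strictMono_of_injective W.injective_subtype
  have hcomapstrict : StrictMono (Submodule.comap W.mkQ) :=
    Submodule.comap_strictMono_of_surjective W.mkQ_surjective
  set p' : LTSeries (Submodule R M) := p.map _ hmapstrict with hp'
  set q' : LTSeries (Submodule R M) := q.map _ hcomapstrict with hq'
  have hle : p'.last ≤ q'.head := by
    have h1 : p'.last ≤ W := by
      simp only [hp', LTSeries.last_map]
      exact Submodule.map_subtype_le _ _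
    have h2 : W ≤ q'.head := by
      simp only [hq', LTSeries.head_map]
      exact le_trans (le_of_eq (Submodule.ker_mkQ W).symm) (Submodule.comap_mono bot_le)
    exact h1.trans h2
  rcases lt_or_eq_of_le hle with hlt | heq
  · have := le_iSup (fun (c : LTSeries (Submodule R M)) => (c.length : ℕ∞)) (p'.append q' hlt)
    refine le_trans ?_ this
    have hl : (p'.append q' hlt).length = p.length + q.length + 1 := by
      simp [RelSeries.append, hp', hq']
    rw [hl]
    push_cast
    exact le_self_add
  · have := le_iSup (fun (c : LTSeries (Submodule R M)) => (c.length : ℕ∞)) (p'.smash q' heq)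
    refine le_trans ?_ this
    simp [RelSeries.smash_length, hp', hq']

/-- Additivity of module "length" (as sup of chain lengths) in a short exact sequence. -/
lemma eLen_add (W : Submodule R M) :
    eLen (Submodule R M) = eLen (Submodule R ↥W) + eLen (Submodule R (M ⧸ W)) := by
  apply le_antisymm
  · refine iSup_le fun x => ?_
    exact (chain_le W x).trans
      (add_le_add (height_le_eLen _) (height_le_eLen _))
  · exact ENat.iSup_add_iSup_le fun p q => combine_le W p q

lemma krullDim_add (W : Submodule R M) :
    Order.krullDim (Submodule R M) =
      Order.krullDim (Submodule R ↥W) + Order.krullDim (Submodule R (M ⧸ W)) := by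
  rw [krullDim_eq_eLen, krullDim_eq_eLen, krullDim_eq_eLen, eLen_add W]
  exact_mod_cast rfl



variable {R : Type*} [CommRing R] {M : Type*} [AddCommGroup M] [Module R M]

lemma sqLen_self (P : Submodule R M) : sqLen R P P = 0 := by
  have h : P.comap P.subtype = ⊤ := by
    ext x; simpa using x.2
  have : Subsingleton (↥P ⧸ (P.comap P.subtype)) := by
    rw [Submodule.Quotient.subsingleton_iff]; exact h
  have : Subsingleton (Submodule R (↥P ⧸ (P.comap P.subtype))) := inferInstance
  exact le_antisymm (Order.krullDim_nonpos_of_subsingleton) (Order.krullDim_nonneg)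

lemma sqLen_add (T P N : Submodule R M) (hNP : N ≤ P) (hPT : P ≤ T) :
    sqLen R T N = sqLen R P N + sqLen R T P := by
  classical
  set N₁ : Submodule R ↥T := N.comap T.subtype with hN₁
  set P₁ : Submodule R ↥T := P.comap T.subtype with hP₁
  have h₁ : N₁ ≤ P₁ := Submodule.comap_mono hNP
  set W : Submodule R (↥T ⧸ N₁) := P₁.map N₁.mkQ with hW
  have kd := krullDim_add W
  -- identify quotient
  have iso2 : ((↥T ⧸ N₁) ⧸ W) ≃ₗ[R] (↥T ⧸ P₁) :=
    Submodule.quotientQuotientEquivQuotient N₁ P₁ h₁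
  -- identify W with P/N
  let e1 : ↥P₁ ≃ₗ[R] ↥P := Submodule.comapSubtypeEquivOfLe hPT
  have hmap : (N₁.comap P₁.subtype).map (e1 : ↥P₁ →ₗ[R] ↥P) = N.comap P.subtype := by
    ext x
    simp only [Submodule.mem_map, Submodule.mem_comap, Submodule.subtype_apply]
    constructor
    · rintro ⟨y, hy, rfl⟩
      have hco : ((e1 y : ↥P) : M) = ((y : ↥T) : M) := by
        simp [e1, Submodule.comapSubtypeEquivOfLe]
      simpa [hco] using (show ((y : ↥T) : M) ∈ N from hy)
    · intro hx
      refine ⟨⟨⟨x.1, hPT x.2⟩, x.2⟩, hx, ?_⟩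
      apply Subtype.ext
      simp [e1, Submodule.comapSubtypeEquivOfLe]
  have e2 : (↥P₁ ⧸ (N₁.comap P₁.subtype)) ≃ₗ[R] (↥P ⧸ (N.comap P.subtype)) :=
    Submodule.Quotient.equiv _ _ e1 hmap
  have e0 : (↥P₁ ⧸ (N₁.comap P₁.subtype)) ≃ₗ[R] ↥W := by
    let f : ↥P₁ →ₗ[R] (↥T ⧸ N₁) := N₁.mkQ.comp P₁.subtype
    have hker : LinearMap.ker f = N₁.comap P₁.subtype := by
      rw [show f = N₁.mkQ.comp P₁.subtype from rfl, LinearMap.ker_comp, Submodule.ker_mkQ]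
    have hrange : LinearMap.range f = W := by
      rw [show f = N₁.mkQ.comp P₁.subtype from rfl, LinearMap.range_comp, Submodule.range_subtype]
    exact (Submodule.quotEquivOfEq _ _ hker.symm).trans
      ((LinearMap.quotKerEquivRange f).trans (LinearEquiv.ofEq _ _ hrange))
  have iso1 : ↥W ≃ₗ[R] (↥P ⧸ (N.comap P.subtype)) := e0.symm.trans e2
  have d1 : Order.krullDim (Submodule R ↥W) =
      Order.krullDim (Submodule R (↥P ⧸ (N.comap P.subtype))) :=
    Order.krullDim_eq_of_orderIso (Submodule.orderIsoMapComap iso1)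
  have d2 : Order.krullDim (Submodule R ((↥T ⧸ N₁) ⧸ W)) =
      Order.krullDim (Submodule R (↥T ⧸ P₁)) :=
    Order.krullDim_eq_of_orderIso (Submodule.orderIsoMapComap iso2)
  rw [d1, d2] at kd
  exact kd

lemma sqLen_sum (P : ℕ → Submodule R M) (anti : ∀ i, P (i + 1) ≤ P i) (n : ℕ) :
    ∑ i ∈ Finset.range n, sqLen R (P i) (P (i + 1)) = sqLen R (P 0) (P n) := by
  induction n with
  | zero => simp [sqLen_self]
  | succ n ih =>
    have hle : ∀ m, P m ≤ P 0 := by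
      intro m; induction m with
      | zero => exact le_rfl
      | succ m ih' => exact (anti m).trans ih'
    rw [Finset.sum_range_succ, ih,
      sqLen_add (P 0) (P n) (P (n + 1)) (anti n) (hle n), add_comm]



attribute [local instance] MvPolynomial.gradedAlgebra

variable {R : Type*} [CommRing R] {p : ℕ} {E : Submodule R (Fin p → R)}

/-- The irrelevant ideal of `A = R[T₁,…,T_p]`. -/
noncomputable def irrIdeal (R : Type*) [CommRing R] (p : ℕ) : Ideal (MvPolynomial (Fin p) R) :=
  Ideal.span (Set.range (X : Fin p → MvPolynomial (Fin p) R))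

lemma mem_irrIdeal_iff {f : MvPolynomial (Fin p) R} :
    f ∈ irrIdeal R p ↔ ∀ m ∈ f.support, m ≠ 0 := by
  rw [irrIdeal, ← Set.image_univ, mem_ideal_span_X_image]
  constructor
  · intro h m hm hm0
    obtain ⟨i, _, hi⟩ := h m hm
    exact hi (by simp [hm0])
  · intro h m hm
    obtain ⟨i, hi⟩ := Finsupp.ne_iff.mp (h m hm)
    exact ⟨i, trivial, by simpa using hi⟩

lemma sub_C_constantCoeff_mem (f : MvPolynomial (Fin p) R) :
    f - C (constantCoeff f) ∈ irrIdeal R p := by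
  rw [mem_irrIdeal_iff]
  intro m hm hm0
  subst hm0
  simp only [mem_support_iff] at hm
  apply hm
  simp [coeff_sub, constantCoeff_eq, coeff_C]

lemma linForm_isHomogeneous (h : Fin p → R) :
    linForm R p h ∈ homogeneousSubmodule (Fin p) R 1 := by
  apply Submodule.sum_mem
  intro i _
  rw [mem_homogeneousSubmodule]
  exact (isHomogeneous_X R i).C_mul _

lemma totalDegree_linForm_le (h : Fin p → R) : (linForm R p h).totalDegree ≤ 1 := by
  refine (totalDegree_finset_sum _ _).trans ?_
  apply Finset.sup_le
  intro i _
  rw [← smul_eq_C_mul]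
  refine (totalDegree_smul_le _ _).trans ?_
  rw [X]
  refine (totalDegree_monomial_le _ _).trans ?_
  simp

lemma reesIdeal_isHomogeneous :
    (reesIdeal R p E).IsHomogeneous (homogeneousSubmodule (Fin p) R) := by
  apply Ideal.homogeneous_span
  rintro x ⟨h, -, rfl⟩
  exact ⟨1, linForm_isHomogeneous h⟩

lemma irrIdeal_isHomogeneous :
    (irrIdeal R p).IsHomogeneous (homogeneousSubmodule (Fin p) R) := by
  apply Ideal.homogeneous_span
  rintro x ⟨i, rfl⟩
  exact ⟨1, by rw [mem_homogeneousSubmodule]; exact isHomogeneous_X R i⟩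

lemma reesIdeal_pow_isHomogeneous (i : ℕ) :
    ((reesIdeal R p E) ^ i).IsHomogeneous (homogeneousSubmodule (Fin p) R) := by
  induction i with
  | zero => simpa using Ideal.IsHomogeneous.top (homogeneousSubmodule (Fin p) R)
  | succ i ih => rw [pow_succ]; exact ih.mul reesIdeal_isHomogeneous

/-- `C a * X j ∈ I` when the vector `a·e_j` belongs to `E`. -/
lemma C_mul_X_mem (a : R) (j : Fin p) (haj : Pi.single j a ∈ E) :
    C a * X j ∈ reesIdeal R p E := by
  have : C a * X j = linForm R p (Pi.single j a) := by
    rw [linForm, Finset.sum_eq_single j]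
    · simp
    · intro i _ hij
      simp [Pi.single_eq_of_ne hij]
    · simp
  rw [this]
  exact Ideal.subset_span ⟨_, haj, rfl⟩

/-- `C a · (irrelevant ideal) ⊆ I` when all `a·e_j ∈ E`. -/
lemma C_mul_irr_mem (a : R) (ha : ∀ j, Pi.single j a ∈ E) {v : MvPolynomial (Fin p) R}
    (hv : v ∈ irrIdeal R p) : C a * v ∈ reesIdeal R p E := by
  refine Submodule.span_induction ?_ ?_ ?_ ?_ hv
  · rintro x ⟨j, rfl⟩
    exact C_mul_X_mem a j (ha j)
  · simp
  · intro x y _ _ hx hy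
    rw [mul_add]
    exact Ideal.add_mem _ hx hy
  · intro r x _ hx
    rw [smul_eq_mul, show C a * (r * x) = r * (C a * x) by ring]
    exact Ideal.mul_mem_left _ r hx

/-- The `R`-span of the generators of the Rees ideal. -/
noncomputable def linSpan (R : Type*) [CommRing R] (p : ℕ) (E : Submodule R (Fin p → R)) :
    Submodule R (MvPolynomial (Fin p) R) :=
  Submodule.span R (linForm R p '' (E : Set (Fin p → R)))

lemma linSpan_le_rees : linSpan R p E ≤ (reesIdeal R p E).restrictScalars R := by
  rw [linSpan]
  apply Submodule.span_le.mpr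
  intro x hx
  exact Ideal.subset_span hx

lemma linSpan_le_deg : linSpan R p E ≤ restrictTotalDegree (Fin p) R 1 := by
  rw [linSpan]
  apply Submodule.span_le.mpr
  rintro x ⟨h, -, rfl⟩
  rw [SetLike.mem_coe, mem_restrictTotalDegree]
  exact totalDegree_linForm_le h

/-- Decomposition of elements of `I`: `I ⊆ I·J + R-span of generators`. -/
lemma rees_decomp {w : MvPolynomial (Fin p) R} (hw : w ∈ reesIdeal R p E) :
    w ∈ (reesIdeal R p E * irrIdeal R p).restrictScalars R ⊔ linSpan R p E := by
  refine Submodule.span_induction ?_ ?_ ?_ ?_ hw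
  · intro x hx
    exact Submodule.mem_sup_right (Submodule.subset_span hx)
  · simp
  · intro x y _ _ hx hy
    exact Submodule.add_mem _ hx hy
  · intro r x hxI hx
    rw [Submodule.mem_sup] at hx
    obtain ⟨x₁, hx₁, x₂, hx₂, rfl⟩ := hx
    rw [smul_eq_mul, mul_add]
    apply Submodule.add_mem
    · exact Submodule.mem_sup_left (Ideal.mul_mem_left _ r hx₁)
    · have hdec : r * x₂ = C (constantCoeff r) * x₂ + (r - C (constantCoeff r)) * x₂ := by ring
      rw [hdec]
      apply Submodule.add_mem
      · rw [← smul_eq_C_mul]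
        exact Submodule.mem_sup_right (Submodule.smul_mem _ _ hx₂)
      · apply Submodule.mem_sup_left
        rw [Submodule.restrictScalars_mem,
          mul_comm (r - C (constantCoeff r)) x₂]
        exact Ideal.mul_mem_mul (linSpan_le_rees hx₂) (sub_C_constantCoeff_mem r)

/-- Key decomposition: `I^i ⊆ I^i·J + (I^i ∩ {deg ≤ i})`. -/
lemma rees_pow_decomp (i : ℕ) {f : MvPolynomial (Fin p) R} (hf : f ∈ (reesIdeal R p E) ^ i) :
    f ∈ ((reesIdeal R p E) ^ i * irrIdeal R p).restrictScalars R ⊔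
      (((reesIdeal R p E) ^ i).restrictScalars R ⊓ restrictTotalDegree (Fin p) R i) := by
  induction i generalizing f with
  | zero =>
    have : f = (f - C (constantCoeff f)) + C (constantCoeff f) := by ring
    rw [this]
    apply Submodule.add_mem
    · apply Submodule.mem_sup_left
      rw [Submodule.restrictScalars_mem, pow_zero, one_mul]
      exact sub_C_constantCoeff_mem f
    · apply Submodule.mem_sup_right
      refine Submodule.mem_inf.mpr ⟨by simp [Ideal.one_eq_top], ?_⟩
      rw [mem_restrictTotalDegree]
      simp [totalDegree_C]
  | succ i ih =>
    rw [pow_succ] at hf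
    refine Submodule.mul_induction_on hf ?_ ?_
    · intro u hu w hw
      obtain ⟨u₁, hu₁, u₂, hu₂, rfl⟩ := Submodule.mem_sup.mp (ih hu)
      obtain ⟨w₁, hw₁, w₂, hw₂, rfl⟩ := Submodule.mem_sup.mp (rees_decomp hw)
      obtain ⟨hu₂I, hu₂d⟩ := Submodule.mem_inf.mp hu₂
      have hdec : (u₁ + u₂) * (w₁ + w₂) = (u₁ * (w₁ + w₂) + u₂ * w₁) + u₂ * w₂ := by ring
      rw [hdec]
      apply Submodule.add_mem
      · apply Submodule.mem_sup_left
        rw [Submodule.restrictScalars_mem]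
        apply Ideal.add_mem
        · have hw₁' : w₁ ∈ reesIdeal R p E * irrIdeal R p := hw₁
          have hw' : w₁ + w₂ ∈ reesIdeal R p E :=
            Ideal.add_mem _ (Ideal.mul_le_left hw₁') (linSpan_le_rees hw₂)
          have := Ideal.mul_mem_mul hu₁ hw'
          rwa [show (reesIdeal R p E)^i * irrIdeal R p * reesIdeal R p E
              = (reesIdeal R p E)^(i+1) * irrIdeal R p by rw [pow_succ]; ring] at this
        · have := Ideal.mul_mem_mul hu₂I hw₁
          rwa [show (reesIdeal R p E)^i * (reesIdeal R p E * irrIdeal R p)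
              = (reesIdeal R p E)^(i+1) * irrIdeal R p by rw [pow_succ]; ring] at this
      · apply Submodule.mem_sup_right
        refine Submodule.mem_inf.mpr ⟨?_, ?_⟩
        · rw [Submodule.restrictScalars_mem, pow_succ]
          exact Ideal.mul_mem_mul hu₂I (linSpan_le_rees hw₂)
        · rw [mem_restrictTotalDegree]
          refine (totalDegree_mul _ _).trans ?_
          have h1 := (mem_restrictTotalDegree _ _ u₂).mp hu₂d
          have h2 := (mem_restrictTotalDegree _ _ w₂).mp (linSpan_le_deg hw₂)
          omega
    · intro x y hx hy
      exact Submodule.add_mem _ hx hy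

/-- A homogeneous element of `I^i` of degree `n > i` lies in `I^i · J`. -/
lemma homog_mem_mul_irr {i n : ℕ} (hin : i < n) {f : MvPolynomial (Fin p) R}
    (hfI : f ∈ (reesIdeal R p E) ^ i) (hfn : f ∈ homogeneousSubmodule (Fin p) R n) :
    f ∈ (reesIdeal R p E) ^ i * irrIdeal R p := by
  obtain ⟨f₁, hf₁, f₂, hf₂, hsum⟩ := Submodule.mem_sup.mp (rees_pow_decomp i hfI)
  obtain ⟨-, hf₂d⟩ := Submodule.mem_inf.mp hf₂
  have hcomp : homogeneousComponent n f = f := by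
    rw [homogeneousComponent_of_mem hfn]; simp
  have hc2 : homogeneousComponent n f₂ = 0 := by
    apply homogeneousComponent_eq_zero
    have := (mem_restrictTotalDegree _ _ f₂).mp hf₂d
    omega
  have hc1 : homogeneousComponent n f₁ ∈ (reesIdeal R p E) ^ i * irrIdeal R p := by
    have hhom := (reesIdeal_pow_isHomogeneous (E := E) i).mul irrIdeal_isHomogeneous
    have := hhom n hf₁
    rwa [← MvPolynomial.decomposition.decompose'_apply]
  have : homogeneousComponent n f = homogeneousComponent n f₁ + homogeneousComponent n f₂ := by
    rw [← hsum, map_add]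
  rw [← hcomp, this, hc2, add_zero]
  exact hc1

/-- The key algebraic step. -/
lemma C_smul_mem_pow_succ (a : R) (ha : ∀ j, Pi.single j a ∈ E) {i n : ℕ} (hin : i < n)
    {f : MvPolynomial (Fin p) R} (hfI : f ∈ (reesIdeal R p E) ^ i)
    (hfn : f ∈ homogeneousSubmodule (Fin p) R n) :
    C a * f ∈ (reesIdeal R p E) ^ (i + 1) := by
  have hf := homog_mem_mul_irr hin hfI hfn
  refine Submodule.mul_induction_on hf ?_ ?_
  · intro u hu v hv
    rw [show C a * (u * v) = u * (C a * v) by ring, pow_succ]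
    exact Ideal.mul_mem_mul hu (C_mul_irr_mem a ha hv)
  · intro x y hx hy
    rw [mul_add]
    exact Ideal.add_mem _ hx hy



variable (R : Type*) [CommRing R] [IsNoetherianRing R] [IsLocalRing R]

lemma exists_pow_smul_le (p : ℕ) (E : Submodule R (Fin p → R))
    (hcolen : IsFiniteLength R ((Fin p → R) ⧸ E)) :
    ∃ k : ℕ, (IsLocalRing.maximalIdeal R) ^ k • (⊤ : Submodule R (Fin p → R)) ≤ E := by
  obtain ⟨hNoeth, hArt⟩ := isFiniteLength_iff_isNoetherian_isArtinian.mp hcolen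
  set m := IsLocalRing.maximalIdeal R with hm
  set Q := (Fin p → R) ⧸ E with hQ
  let f : ℕ →o (Submodule R Q)ᵒᵈ :=
    ⟨fun k => OrderDual.toDual (m ^ k • ⊤), fun a b hab => by
      simp only [OrderDual.toDual_le_toDual]
      exact Submodule.smul_mono_left (Ideal.pow_le_pow_right hab)⟩
  obtain ⟨k, hk⟩ := IsArtinian.monotone_stabilizes f
  have hstab : m ^ k • (⊤ : Submodule R Q) = m ^ (k + 1) • ⊤ := by
    exact hk (k + 1) (Nat.le_succ k)
  set N : Submodule R Q := m ^ k • ⊤ with hN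
  have hNfg : N.FG := IsNoetherian.noetherian N
  have hNsmul : N ≤ m • N := by
    refine le_of_eq (hstab.trans ?_)
    rw [pow_succ' m k, ← smul_eq_mul, Submodule.smul_assoc]
  have hjac : m ≤ (⊥ : Ideal R).jacobson := by
    rw [IsLocalRing.jacobson_eq_maximalIdeal ⊥ bot_ne_top]
  have hbot : N = ⊥ := Submodule.eq_bot_of_le_smul_of_le_jacobson_bot m N hNfg hNsmul hjac
  refine ⟨k, ?_⟩
  have hmap : (m ^ k • (⊤ : Submodule R (Fin p → R))).map E.mkQ = ⊥ := by
    rw [Submodule.map_smul'', Submodule.map_top, Submodule.range_mkQ, ← hN, hbot]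
  have := Submodule.map_le_iff_le_comap.mp (le_of_eq hmap)
  rwa [Submodule.comap_bot, Submodule.ker_mkQ] at this

end FCH

/-- **Finite colength collapses the `c♯` Hilbert sum** (Remark 6.2).  Let `(R,𝔪)` be a
Noetherian local ring and `E ⊆ R^p` a submodule of finite colength.  Then for `s` large,
`𝔪^{s+1}·R_i(E)·S_{n−i}(R^p) ⊆ R_{i+1}(E)·S_{n−i−1}(R^p)` for all `n` and `0 ≤ i ≤ n−1`
(here `R_i(E)·S_{n−i}(R^p) = [I^i]_n` with `I` the Rees ideal of `E`), and consequently
`∑_{i=0}^{n−1} length_R( R_i(E)S_{n−i} / (𝔪^{s+1}R_i(E)S_{n−i} + R_{i+1}(E)S_{n−i−1}) )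
  = length_R ( S_n(R^p) / R_n(E) )`. -/
theorem finite_colength_hilbert_sum
    (R : Type*) [CommRing R] [IsNoetherianRing R] [IsLocalRing R]
    (p : ℕ) (E : Submodule R (Fin p → R))
    (hcolen : IsFiniteLength R ((Fin p → R) ⧸ E)) :
    ∃ s₀ : ℕ, ∀ s ≥ s₀,
      (∀ n i : ℕ, i < n →
        (IsLocalRing.maximalIdeal R) ^ (s + 1) •
            (((reesIdeal R p E) ^ i).restrictScalars R ⊓ homogeneousSubmodule (Fin p) R n) ≤
          ((reesIdeal R p E) ^ (i + 1)).restrictScalars R ⊓ homogeneousSubmodule (Fin p) R n) ∧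
      (∀ n : ℕ,
        (∑ i ∈ Finset.range n,
          sqLen R (((reesIdeal R p E) ^ i).restrictScalars R ⊓ homogeneousSubmodule (Fin p) R n)
            ((IsLocalRing.maximalIdeal R) ^ (s + 1) •
                (((reesIdeal R p E) ^ i).restrictScalars R ⊓ homogeneousSubmodule (Fin p) R n)
              ⊔ (((reesIdeal R p E) ^ (i + 1)).restrictScalars R ⊓
                  homogeneousSubmodule (Fin p) R n))) =
          sqLen R (homogeneousSubmodule (Fin p) R n)
            (((reesIdeal R p E) ^ n).restrictScalars R ⊓ homogeneousSubmodule (Fin p) R n)) := by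
  classical
  obtain ⟨k, hE⟩ := FCH.exists_pow_smul_le R p E hcolen
  refine ⟨k, fun s hs => ?_⟩
  have part1 : ∀ n i : ℕ, i < n →
      (IsLocalRing.maximalIdeal R) ^ (s + 1) •
          (((reesIdeal R p E) ^ i).restrictScalars R ⊓ homogeneousSubmodule (Fin p) R n) ≤
        ((reesIdeal R p E) ^ (i + 1)).restrictScalars R ⊓ homogeneousSubmodule (Fin p) R n := by
    intro n i hin
    refine Submodule.smul_le.mpr ?_
    intro a ha x hx
    obtain ⟨hx1, hx2⟩ := Submodule.mem_inf.mp hx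
    have hak : a ∈ (IsLocalRing.maximalIdeal R) ^ k :=
      Ideal.pow_le_pow_right (by omega) ha
    have haE : ∀ j, Pi.single j a ∈ E := by
      intro j
      apply hE
      have hsingle : Pi.single j a = a • (Pi.single j (1 : R) : Fin p → R) := by
        funext t
        by_cases ht : t = j <;> simp [Pi.single_apply, ht]
      rw [hsingle]
      exact Submodule.smul_mem_smul hak Submodule.mem_top
    refine Submodule.mem_inf.mpr ⟨?_, Submodule.smul_mem _ a hx2⟩
    rw [Submodule.restrictScalars_mem, smul_eq_C_mul]
    exact FCH.C_smul_mem_pow_succ a haE hin hx1 hx2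
  refine ⟨part1, ?_⟩
  intro n
  have habs : ∀ i, i < n →
      ((IsLocalRing.maximalIdeal R) ^ (s + 1) •
          (((reesIdeal R p E) ^ i).restrictScalars R ⊓ homogeneousSubmodule (Fin p) R n)
        ⊔ (((reesIdeal R p E) ^ (i + 1)).restrictScalars R ⊓
            homogeneousSubmodule (Fin p) R n))
      = (((reesIdeal R p E) ^ (i + 1)).restrictScalars R ⊓
          homogeneousSubmodule (Fin p) R n) :=
    fun i hi => sup_eq_right.mpr (part1 n i hi)
  have hsum : ∑ i ∈ Finset.range n,
      sqLen R (((reesIdeal R p E) ^ i).restrictScalars R ⊓ homogeneousSubmodule (Fin p) R n)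
        ((IsLocalRing.maximalIdeal R) ^ (s + 1) •
            (((reesIdeal R p E) ^ i).restrictScalars R ⊓ homogeneousSubmodule (Fin p) R n)
          ⊔ (((reesIdeal R p E) ^ (i + 1)).restrictScalars R ⊓
              homogeneousSubmodule (Fin p) R n)) =
      ∑ i ∈ Finset.range n,
      sqLen R (((reesIdeal R p E) ^ i).restrictScalars R ⊓ homogeneousSubmodule (Fin p) R n)
        (((reesIdeal R p E) ^ (i + 1)).restrictScalars R ⊓ homogeneousSubmodule (Fin p) R n) :=
    Finset.sum_congr rfl fun i hi => by rw [habs i (Finset.mem_range.mp hi)]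
  rw [hsum]
  have htel := FCH.sqLen_sum
    (fun i => ((reesIdeal R p E) ^ i).restrictScalars R ⊓ homogeneousSubmodule (Fin p) R n)
    (fun i => inf_le_inf_right _ (fun x hx => Ideal.pow_le_pow_right (Nat.le_succ i) hx)) n
  rw [htel]
  have hP0 : ((reesIdeal R p E) ^ 0).restrictScalars R ⊓ homogeneousSubmodule (Fin p) R n
      = homogeneousSubmodule (Fin p) R n := by
    rw [pow_zero, Ideal.one_eq_top]
    simp
  rw [hP0]
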